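/- arXiv:1108.0095 — 4 statements merged into one kernel-verified Lean document; each statement's English description precedes it below -/
import Mathlib

section
/- There is an absolute constant $K$ such that for every integer $a \ge 1$, every non-principal Dirichlet character $\chi$ modulo $a$, and every $s = \sigma + it$ with $\sigma \ge 1$ and $t \in \mathbb{R}$, one has $|L(s,\chi)| \le K \log\big(a(2 + |t|)\big)$. -/
/-!
For `Re s > 1` cut the Dirichlet series at `N ≈ X = a (2 + |t|)`. The head is at most the harmonic
sum `1 + log N`. In the tail, partial summation against the character sums, which are bounded by
`a` because a non-principal character sums to zero over a period, gives `O((1 + |s|) a / N)`,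
which is `O(1)` when `Re s ≤ 2`; for `Re s > 2` the whole series is bounded by `∑ n⁻²`. The bound
passes to `Re s = 1` because `L(·, χ)` is continuous for non-principal `χ`.
-/

open Finset Complex

lemma ZMod.sum_range_natCast {M : Type*} [AddCommMonoid M] (n : ℕ) [NeZero n]
    (f : ZMod n → M) : ∑ j ∈ range n, f j = ∑ x, f x :=
  Finset.sum_nbij' (fun j => (j : ZMod n)) ZMod.val (fun _ _ => mem_univ _)
    (fun x _ => mem_range.mpr x.val_lt) (fun _ hj => ZMod.val_cast_of_lt (mem_range.mp hj))
    (fun x _ => ZMod.natCast_zmod_val x) (fun _ _ => rfl)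

namespace DirichletCharacter

section CommRing

variable {R : Type*} [CommRing R] [IsDomain R] {a : ℕ} [NeZero a] {χ : DirichletCharacter R a}

lemma sum_range_add_eq_zero (hχ : χ ≠ 1) (k : ℕ) :
    ∑ j ∈ range a, χ ((k + j : ℕ) : ZMod a) = 0 := by
  push_cast
  rw [ZMod.sum_range_natCast a (fun x => χ (k + x))]
  exact (Equiv.sum_comp (Equiv.addLeft (k : ZMod a)) χ).trans (MulChar.sum_eq_zero_of_ne_one hχ)

lemma sum_range_add_period (hχ : χ ≠ 1) (m : ℕ) :
    ∑ n ∈ range (m + a), χ n = ∑ n ∈ range m, χ n := by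
  rw [sum_range_add, sum_range_add_eq_zero hχ, add_zero]

end CommRing

variable {F : Type*} [NormedField F] {a : ℕ} [NeZero a] {χ : DirichletCharacter F a}

lemma norm_sum_range_le (hχ : χ ≠ 1) (m : ℕ) : ‖∑ n ∈ range m, χ n‖ ≤ a := by
  induction m using Nat.strong_induction_on with
  | _ m ih =>
    rcases lt_or_ge m a with hma | ham
    · calc ‖∑ n ∈ range m, χ n‖ ≤ ∑ n ∈ range m, ‖χ n‖ := norm_sum_le _ _
        _ ≤ ∑ _n ∈ range m, (1 : ℝ) := sum_le_sum fun n _ => χ.norm_le_one n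
        _ ≤ a := by simpa using hma.le
    · obtain ⟨k, rfl⟩ := Nat.exists_eq_add_of_le' ham
      rw [sum_range_add_period hχ]
      exact ih k (by simp [Nat.pos_of_neZero a])

end DirichletCharacter

lemma Complex.norm_ofReal_cpow_neg_le {x : ℝ} (hx : 1 ≤ x) {s : ℂ} {k : ℕ}
    (hk : (k : ℝ) ≤ s.re) : ‖(x : ℂ) ^ (-s)‖ ≤ (x ^ k)⁻¹ := by
  rw [norm_cpow_eq_rpow_re_of_pos (by linarith), neg_re, Real.rpow_neg (by linarith),
    ← Real.rpow_natCast]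
  exact inv_anti₀ (by positivity) (Real.rpow_le_rpow_of_exponent_le hx hk)

lemma Complex.norm_add_one_cpow_neg_sub_cpow_neg_le {x : ℝ} (hx : 1 ≤ x) {s : ℂ}
    (hs : 1 ≤ s.re) : ‖((x : ℂ) + 1) ^ (-s) - (x : ℂ) ^ (-s)‖ ≤ ‖s‖ * (x ^ 2)⁻¹ := by
  have hderiv : ∀ y ∈ Set.Icc x (x + 1),
      HasDerivWithinAt (fun y : ℝ => (y : ℂ) ^ (-s)) (-s * (y : ℂ) ^ (-s - 1))
        (Set.Icc x (x + 1)) y :=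
    fun y hy => by
      have hy : (y : ℂ) ∈ slitPlane := ofReal_mem_slitPlane.mpr (by linarith [hy.1])
      exact ((hasStrictDerivAt_cpow_const (c := -s) hy).hasDerivAt.comp_ofReal).hasDerivWithinAt
  have hbound : ∀ y ∈ Set.Icc x (x + 1), ‖-s * (y : ℂ) ^ (-s - 1)‖ ≤ ‖s‖ * (x ^ 2)⁻¹ := by
    intro y hy
    have hy2 : ‖(y : ℂ) ^ (-(s + 1))‖ ≤ (y ^ 2)⁻¹ :=
      norm_ofReal_cpow_neg_le (hx.trans hy.1) (by simp; linarith)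
    rw [norm_mul, norm_neg, neg_sub_left, add_comm]
    gcongr
    exact hy2.trans (inv_anti₀ (by positivity) (pow_le_pow_left₀ (by linarith) hy.1 2))
  simpa using (convex_Icc x (x + 1)).norm_image_sub_le_of_norm_hasDerivWithin_le hderiv hbound
    (Set.left_mem_Icc.mpr (by linarith)) (Set.right_mem_Icc.mpr (by linarith))

lemma sum_Ico_inv_sq_le {N : ℕ} (hN : N ≠ 0) (M : ℕ) :
    ∑ i ∈ Ico N M, ((i : ℝ) ^ 2)⁻¹ ≤ 2 / N := by
  obtain ⟨N, rfl⟩ := Nat.exists_eq_add_one_of_ne_zero hN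
  rw [Finset.Ico_add_one_left_eq_Ioo]
  simpa using sum_Ioo_inv_sq_le (α := ℝ) N M

lemma norm_sum_Ico_cpow_neg_mul_le {f : ℕ → ℂ} {C : ℝ} (hf : ∀ m, ‖∑ n ∈ range m, f n‖ ≤ C)
    {s : ℂ} (hs : 1 ≤ s.re) {N M : ℕ} (hN : N ≠ 0) (hNM : N < M) :
    ‖∑ n ∈ Ico N M, (n : ℂ) ^ (-s) * f n‖ ≤ 2 * (1 + ‖s‖) * C / N := by
  have hC : 0 ≤ C := (norm_nonneg _).trans (hf 0)
  have hN1 : (1 : ℝ) ≤ N := Nat.one_le_cast.mpr (Nat.one_le_iff_ne_zero.mpr hN)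
  have hboundary : ∀ n m : ℕ, N ≤ n → ‖(n : ℂ) ^ (-s) * ∑ i ∈ range m, f i‖ ≤ C / N := by
    intro n m hn
    have hn' : (N : ℝ) ≤ n := Nat.cast_le.mpr hn
    have hpow : ‖(n : ℂ) ^ (-s)‖ ≤ (N : ℝ)⁻¹ := by
      simpa using (norm_ofReal_cpow_neg_le (hN1.trans hn') (k := 1) (by simpa using hs)).trans
        (inv_anti₀ (by positivity) (by simpa using hn'))
    rw [norm_mul, div_eq_inv_mul]
    exact mul_le_mul hpow (hf m) (norm_nonneg _) (by positivity)
  have hdiff : ‖∑ i ∈ Ico N (M - 1), (((i + 1 : ℕ) : ℂ) ^ (-s) - (i : ℂ) ^ (-s)) *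
      ∑ j ∈ range (i + 1), f j‖ ≤ ‖s‖ * C * (2 / N) := by
    calc _ ≤ ∑ i ∈ Ico N (M - 1), ‖s‖ * C * ((i : ℝ) ^ 2)⁻¹ := by
          refine (norm_sum_le _ _).trans (sum_le_sum fun i hi => ?_)
          have hi : (1 : ℝ) ≤ i := hN1.trans (Nat.cast_le.mpr (mem_Ico.mp hi).1)
          rw [norm_mul, mul_right_comm]
          push_cast
          exact mul_le_mul (by simpa using norm_add_one_cpow_neg_sub_cpow_neg_le hi hs)
            (hf _) (norm_nonneg _) (by positivity)
      _ ≤ ‖s‖ * C * ∑ i ∈ Ico N M, ((i : ℝ) ^ 2)⁻¹ := by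
          rw [← mul_sum]
          gcongr
          exact Nat.sub_le M 1
      _ ≤ ‖s‖ * C * (2 / N) := by gcongr; exact sum_Ico_inv_sq_le hN M
  simp_rw [← smul_eq_mul, sum_Ico_by_parts _ _ hNM, smul_eq_mul]
  calc _ ≤ C / N + C / N + ‖s‖ * C * (2 / N) :=
        (norm_sub_le _ _).trans (add_le_add ((norm_sub_le _ _).trans (add_le_add
          (hboundary _ _ (by omega)) (hboundary _ _ le_rfl))) hdiff)
    _ = 2 * (1 + ‖s‖) * C / N := by ring

namespace LSeries

variable {f : ℕ → ℂ} {s : ℂ}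

lemma norm_term_succ_le (hf : ∀ n, ‖f n‖ ≤ 1) {k : ℕ} (hk : (k : ℝ) ≤ s.re) (n : ℕ) :
    ‖term f s (n + 1)‖ ≤ (((n : ℝ) + 1) ^ k)⁻¹ := by
  have hpow : ‖((n + 1 : ℕ) : ℂ) ^ (-s)‖ ≤ (((n : ℝ) + 1) ^ k)⁻¹ := by
    simpa using norm_ofReal_cpow_neg_le (x := n + 1) (by simp) hk
  rw [term_of_ne_zero n.succ_ne_zero, div_eq_mul_inv, ← cpow_neg, norm_mul]
  simpa using mul_le_mul (hf (n + 1)) hpow (norm_nonneg _) zero_le_one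

lemma sum_range_norm_term_le_one_add_log (hf : ∀ n, ‖f n‖ ≤ 1) (hs : 1 ≤ s.re) (N : ℕ) :
    ∑ n ∈ range (N + 1), ‖term f s n‖ ≤ 1 + Real.log N := by
  rw [sum_range_succ', term_zero, norm_zero, add_zero]
  calc _ ≤ ∑ n ∈ range N, ((n : ℝ) + 1)⁻¹ :=
        sum_le_sum fun n _ => by simpa using norm_term_succ_le hf (k := 1) (by simpa using hs) n
    _ = harmonic N := by simp [harmonic]
    _ ≤ 1 + Real.log N := harmonic_le_one_add_log N

lemma sum_range_norm_term_le_two (hf : ∀ n, ‖f n‖ ≤ 1) (hs : 2 ≤ s.re) (N : ℕ) :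
    ∑ n ∈ range N, ‖term f s n‖ ≤ 2 := by
  rcases N with _ | N
  · simp
  rw [sum_range_succ', term_zero, norm_zero, add_zero]
  calc _ ≤ ∑ n ∈ range N, (((n : ℝ) + 1) ^ 2)⁻¹ :=
        sum_le_sum fun n _ => norm_term_succ_le hf (by simpa using hs) n
    _ = ∑ n ∈ Ico 1 (N + 1), ((n : ℝ) ^ 2)⁻¹ := by
        rw [sum_Ico_eq_sum_range]
        simp [add_comm]
    _ ≤ 2 := by simpa using sum_Ico_inv_sq_le one_ne_zero (N + 1)

lemma norm_sum_range_term_le {C : ℝ} (hf₁ : ∀ n, ‖f n‖ ≤ 1)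
    (hfC : ∀ m, ‖∑ n ∈ range m, f n‖ ≤ C) (hs : 1 ≤ s.re) (N M : ℕ) :
    ‖∑ n ∈ range M, term f s n‖ ≤ 1 + Real.log N + 2 * (1 + ‖s‖) * C / (N + 1) := by
  have hhead : ∀ K ≤ N + 1, ‖∑ n ∈ range K, term f s n‖ ≤ 1 + Real.log N := fun K hK =>
    (norm_sum_le _ _).trans <| (sum_le_sum_of_subset_of_nonneg (range_subset_range.mpr hK)
      fun _ _ _ => norm_nonneg _).trans (sum_range_norm_term_le_one_add_log hf₁ hs N)
  rcases le_or_gt M (N + 1) with hMN | hNM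
  · have hC : 0 ≤ C := (norm_nonneg _).trans (hfC 0)
    have : 0 ≤ 2 * (1 + ‖s‖) * C / (N + 1) := by positivity
    linarith [hhead M hMN]
  have htail : ∑ n ∈ Ico (N + 1) M, term f s n = ∑ n ∈ Ico (N + 1) M, (n : ℂ) ^ (-s) * f n :=
    sum_congr rfl fun n hn => by
      rw [term_of_ne_zero (by grind), cpow_neg, div_eq_inv_mul]
  rw [← sum_range_add_sum_Ico _ hNM.le, htail]
  refine (norm_add_le _ _).trans (add_le_add (hhead _ le_rfl) ?_)
  simpa using norm_sum_Ico_cpow_neg_mul_le hfC hs N.succ_ne_zero hNM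

end LSeries

namespace DirichletCharacter

variable {a : ℕ} [NeZero a] {χ : DirichletCharacter ℂ a}

lemma norm_LFunction_le_of_one_lt_re (hχ : χ ≠ 1) {s : ℂ} (hs : 1 < s.re) :
    ‖LFunction χ s‖ ≤ 10 * Real.log (a * (2 + |s.im|)) := by
  set X : ℝ := a * (2 + |s.im|)
  have ha : (1 : ℝ) ≤ a := Nat.one_le_cast.mpr (Nat.pos_of_neZero a)
  have hX : 2 ≤ X := by nlinarith [abs_nonneg s.im]
  have hlogX : Real.log 2 ≤ Real.log X := Real.log_le_log two_pos hX
  have hpartial : ∀ M, ‖∑ n ∈ range M, LSeries.term (χ ·) s n‖ ≤ 10 * Real.log X := by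
    intro M
    rcases le_or_gt s.re 2 with hs2 | hs2
    · set N := ⌈X⌉₊
      have hXN : X ≤ N := Nat.le_ceil X
      have hNX : (N : ℝ) ≤ 2 * X := by linarith [Nat.ceil_lt_add_one (by linarith : 0 ≤ X)]
      have hlogN : Real.log N ≤ Real.log 2 + Real.log X := by
        rw [← Real.log_mul two_ne_zero (by linarith)]
        exact Real.log_le_log (by linarith) hNX
      have hnorm_s : 1 + ‖s‖ ≤ 3 / 2 * (2 + |s.im|) := by
        have hre : |s.re| = s.re := abs_of_pos (by linarith)
        linarith [norm_le_abs_re_add_abs_im s, abs_nonneg s.im]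
      have htail : 2 * (1 + ‖s‖) * a / (N + 1) ≤ 3 := by
        rw [div_le_iff₀ (by positivity)]
        nlinarith
      linarith [LSeries.norm_sum_range_term_le (fun n => χ.norm_le_one n) (norm_sum_range_le hχ)
        hs.le N M, Real.log_two_gt_d9, Real.log_two_lt_d9]
    · linarith [(norm_sum_le _ _).trans
        (LSeries.sum_range_norm_term_le_two (fun n => χ.norm_le_one n) hs2.le M),
        Real.log_two_gt_d9]
  rw [LFunction_eq_LSeries χ hs]
  exact le_of_tendsto' (LSeriesSummable_of_one_lt_re χ hs).hasSum.tendsto_sum_nat.norm hpartial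

end DirichletCharacter

theorem LFunction_bound_on_re_ge_one :
    ∃ K : ℝ, ∀ (a : ℕ) [NeZero a] (χ : DirichletCharacter ℂ a), χ ≠ 1 →
      ∀ s : ℂ, 1 ≤ s.re →
        ‖DirichletCharacter.LFunction χ s‖ ≤ K * Real.log ((a : ℝ) * (2 + |s.im|)) := by
  refine ⟨10, fun a _ χ hχ s hs => ?_⟩
  have hclosed : IsClosed {z : ℂ | ‖DirichletCharacter.LFunction χ z‖ ≤
      10 * Real.log ((a : ℝ) * (2 + |z.im|))} := by
    refine isClosed_le (DirichletCharacter.differentiable_LFunction hχ).continuous.norm ?_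
    refine continuous_const.mul (Continuous.log (by fun_prop) fun z => ?_)
    have : (0 : ℝ) < a := Nat.cast_pos.mpr (Nat.pos_of_neZero a)
    positivity
  refine closure_minimal (fun z hz => ?_) hclosed (by rwa [closure_setOfPred_lt_re])
  exact DirichletCharacter.norm_LFunction_le_of_one_lt_re hχ hz
end

section
/- Let $a > 1$ be an integer and $w > 0$ a real number. Then $\sum_{\substack{1 \le n \le w \\ n \equiv -1 \ (\mathrm{mod}\ a)}} \frac{1}{n} = \frac{1}{a}\left(\log w - \frac{\Gamma'((a-1)/a)}{\Gamma((a-1)/a)} - \log a\right) + E(a,w)$, where $|E(a,w)| \le K a / w$ for an absolute constant $K$. -/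
/-!
Writing the terms as `n = a (k + x)` with `x = (a - 1) / a` and `k < N = ⌊(⌊w⌋ + 1) / a⌋`, the sum
is `a⁻¹ ∑_{k < N} (x + k)⁻¹ = a⁻¹ (ψ (x + N) - ψ x)` by the functional equation
`ψ (y + 1) = ψ y + y⁻¹` of the digamma function `ψ = Γ' / Γ`. Convexity of `log ∘ Γ`, whose slope on
`[y, y + 1]` is `log y`, gives `log y - y⁻¹ ≤ ψ y ≤ log y`; since `x + N` lies within `1` to the
right of `w / a`, this leaves an error of at most `1 / w`.
-/

open Finset

namespace Real

theorem differentiableAt_Gamma_of_pos {x : ℝ} (hx : 0 < x) : DifferentiableAt ℝ Gamma x :=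
  differentiableAt_Gamma fun m => ((neg_nonpos.2 m.cast_nonneg).trans_lt hx).ne'

theorem logDeriv_Gamma_add_one {x : ℝ} (hx : 0 < x) :
    logDeriv Gamma (x + 1) = logDeriv Gamma x + x⁻¹ := by
  have hshift : (fun t => Gamma (t + 1)) =ᶠ[nhds x] fun t => t * Gamma t := by
    filter_upwards [eventually_gt_nhds hx] with t ht using Gamma_add_one ht.ne'
  have h := (logDeriv_congr_nhds hshift).eq_of_nhds
  rw [show (fun t => Gamma (t + 1)) = Gamma ∘ (· + 1) from rfl,
    logDeriv_comp (differentiableAt_Gamma_of_pos (by linarith))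
      (differentiableAt_fun_id.add_const 1),
    deriv_add_const, deriv_id'', mul_one, logDeriv_mul x hx.ne' (Gamma_pos_of_pos hx).ne'
    differentiableAt_fun_id (differentiableAt_Gamma_of_pos hx), logDeriv_id', one_div] at h
  rw [h, add_comm]

theorem logDeriv_Gamma_add_nat {x : ℝ} (hx : 0 < x) (N : ℕ) :
    logDeriv Gamma (x + N) = logDeriv Gamma x + ∑ k ∈ range N, (x + k)⁻¹ := by
  induction N with
  | zero => simp
  | succ n ih =>
    rw [Nat.cast_succ, ← add_assoc, logDeriv_Gamma_add_one (by positivity), ih, sum_range_succ,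
      add_assoc]

theorem slope_log_Gamma {x : ℝ} (hx : 0 < x) : slope (log ∘ Gamma) x (x + 1) = log x := by
  rw [slope_def_field, Function.comp_apply, Function.comp_apply, Gamma_add_one hx.ne',
    log_mul hx.ne' (Gamma_pos_of_pos hx).ne']
  ring

theorem deriv_log_Gamma {x : ℝ} (hx : 0 < x) : deriv (log ∘ Gamma) x = logDeriv Gamma x :=
  deriv_log_comp_eq_logDeriv (differentiableAt_Gamma_of_pos hx) (Gamma_pos_of_pos hx).ne'

theorem differentiableAt_log_Gamma {x : ℝ} (hx : 0 < x) :
    DifferentiableAt ℝ (log ∘ Gamma) x :=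
  (differentiableAt_Gamma_of_pos hx).log (Gamma_pos_of_pos hx).ne'

theorem logDeriv_Gamma_le_log {x : ℝ} (hx : 0 < x) : logDeriv Gamma x ≤ log x := by
  rw [← deriv_log_Gamma hx, ← slope_log_Gamma hx]
  exact convexOn_log_Gamma.deriv_le_slope hx (by simp; linarith) (lt_add_one x)
    (differentiableAt_log_Gamma hx)

theorem log_sub_inv_le_logDeriv_Gamma {x : ℝ} (hx : 0 < x) : log x - x⁻¹ ≤ logDeriv Gamma x := by
  have h : log x ≤ logDeriv Gamma (x + 1) := by
    rw [← deriv_log_Gamma (by linarith), ← slope_log_Gamma hx]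
    exact convexOn_log_Gamma.slope_le_deriv hx (by simp; linarith) (lt_add_one x)
      (differentiableAt_log_Gamma (by linarith))
  rw [logDeriv_Gamma_add_one hx] at h
  linarith

theorem abs_logDeriv_Gamma_sub_log_le {u y : ℝ} (hu : 0 < u) (huy : u ≤ y) (hyu : y ≤ u + 1) :
    |logDeriv Gamma y - log u| ≤ u⁻¹ := by
  have hy : 0 < y := hu.trans_le huy
  have hlog : log y - log u ≤ u⁻¹ := by
    rw [← log_div hy.ne' hu.ne']
    calc log (y / u) ≤ y / u - 1 := log_le_sub_one_of_pos (by positivity)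
      _ ≤ u⁻¹ := by rw [div_sub_one hu.ne', div_le_iff₀ hu, inv_mul_cancel₀ hu.ne']; linarith
  have hinv : y⁻¹ ≤ u⁻¹ := inv_anti₀ hu huy
  have hmono : log u ≤ log y := log_le_log hu huy
  have hupper := logDeriv_Gamma_le_log hy
  have hlower := log_sub_inv_le_logDeriv_Gamma hy
  rw [abs_le]
  constructor <;> linarith

end Real

theorem ZMod.natCast_eq_neg_one_iff_dvd {a n : ℕ} : (n : ZMod a) = -1 ↔ a ∣ n + 1 := by
  rw [eq_neg_iff_add_eq_zero, ← Nat.cast_add_one, ZMod.natCast_eq_zero_iff]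

theorem sum_filter_natCast_eq_neg_one {M : Type*} [AddCommMonoid M] (f : ℕ → M) {a : ℕ}
    (ha : 1 < a) (m : ℕ) :
    ∑ n ∈ (Icc 1 m).filter (fun n : ℕ => (n : ZMod a) = -1), f n =
      ∑ k ∈ range ((m + 1) / a), f (a * (k + 1) - 1) := by
  have hrange {k : ℕ} : k < (m + 1) / a ↔ a * (k + 1) ≤ m + 1 := by
    rw [Nat.lt_iff_add_one_le, Nat.le_div_iff_mul_le (by omega), mul_comm]
  symm
  refine sum_nbij' (fun k => a * (k + 1) - 1) (fun n => (n + 1) / a - 1) ?_ ?_ ?_ ?_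
    (fun _ _ => rfl)
  · intro k hk
    rw [mem_range, hrange] at hk
    have : a ≤ a * (k + 1) := Nat.le_mul_of_pos_right a k.succ_pos
    simp only [mem_filter, mem_Icc, ZMod.natCast_eq_neg_one_iff_dvd]
    refine ⟨⟨by omega, by omega⟩, k + 1, by omega⟩
  · intro n hn
    simp only [mem_filter, mem_Icc, ZMod.natCast_eq_neg_one_iff_dvd] at hn
    obtain ⟨⟨-, hnm⟩, c, hc⟩ := hn
    have hc1 : 1 ≤ c := by rw [Nat.one_le_iff_ne_zero]; rintro rfl; omega
    rw [mem_range, hrange, hc, Nat.mul_div_cancel_left _ (by omega), Nat.sub_add_cancel hc1]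
    omega
  · intro k _
    rw [Nat.sub_add_cancel (Nat.one_le_iff_ne_zero.2 (by positivity)),
      Nat.mul_div_cancel_left _ (by omega), Nat.add_sub_cancel]
  · intro n hn
    obtain ⟨c, hc⟩ := (ZMod.natCast_eq_neg_one_iff_dvd.1 (mem_filter.1 hn).2)
    have hc1 : 1 ≤ c := by rw [Nat.one_le_iff_ne_zero]; rintro rfl; omega
    rw [hc, Nat.mul_div_cancel_left _ (by omega), Nat.sub_add_cancel hc1]
    omega

theorem natCast_mul_succ_sub_one {a : ℕ} (ha : 0 < a) (k : ℕ) :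
    ((a * (k + 1) - 1 : ℕ) : ℝ) = a * (((a : ℝ) - 1) / a + k) := by
  rw [Nat.cast_sub (Nat.one_le_iff_ne_zero.2 (by positivity))]
  field_simp
  push_cast
  ring

open Real in
theorem sum_filter_natCast_eq_neg_one_one_div {a : ℕ} (ha : 1 < a) (m : ℕ) :
    ∑ n ∈ (Icc 1 m).filter (fun n : ℕ => (n : ZMod a) = -1), (1 : ℝ) / n =
      1 / a * (logDeriv Gamma (((a : ℝ) - 1) / a + ((m + 1) / a : ℕ))
        - logDeriv Gamma (((a : ℝ) - 1) / a)) := by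
  have hx : 0 < ((a : ℝ) - 1) / a := div_pos (by rw [sub_pos]; exact_mod_cast ha) (by positivity)
  rw [sum_filter_natCast_eq_neg_one _ ha, logDeriv_Gamma_add_nat hx, add_sub_cancel_left, mul_sum]
  refine sum_congr rfl fun k _ => ?_
  rw [natCast_mul_succ_sub_one (by omega), ← one_div, one_div_mul_one_div]

theorem sub_one_div_add_floor_add_one_div_mem_Icc {a : ℕ} (ha : 0 < a) {w : ℝ} (hw : 0 ≤ w) :
    ((a : ℝ) - 1) / a + ((⌊w⌋₊ + 1) / a : ℕ) ∈ Set.Icc (w / a) (w / a + 1) := by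
  have hlt : ⌊w⌋₊ + 1 < a * ((⌊w⌋₊ + 1) / a + 1) := Nat.lt_mul_div_succ _ ha
  have hle : a * ((⌊w⌋₊ + 1) / a) ≤ ⌊w⌋₊ + 1 := Nat.mul_div_le _ _
  set N := (⌊w⌋₊ + 1) / a
  have hlt' : (⌊w⌋₊ : ℝ) + 2 ≤ a * (N + 1) := by exact_mod_cast hlt
  have hle' : (a : ℝ) * N ≤ ⌊w⌋₊ + 1 := by exact_mod_cast hle
  have hfloor := Nat.floor_le hw
  have hfloor' := Nat.lt_floor_add_one w
  have ha' : (0 : ℝ) < a := by exact_mod_cast ha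
  rw [Set.mem_Icc, div_add_one ha'.ne', div_add' _ _ _ ha'.ne', div_le_div_iff_of_pos_right ha',
    div_le_div_iff_of_pos_right ha']
  constructor <;> linarith

theorem sum_reciprocal_arithmetic_progression :
    ∃ K : ℝ, ∀ (a : ℕ) (w : ℝ), 1 < a → 0 < w →
      |(∑ n ∈ (Finset.Icc 1 ⌊w⌋₊).filter (fun n : ℕ => (↑n : ZMod a) = -1), (1 : ℝ) / n)
          - (1 / (a : ℝ)) * (Real.log w
              - deriv Real.Gamma (((a : ℝ) - 1) / a) / Real.Gamma (((a : ℝ) - 1) / a)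
              - Real.log a)|
        ≤ K * a / w := by
  refine ⟨1, fun a w ha hw => ?_⟩
  have ha0 : (0 : ℝ) < a := by positivity
  obtain ⟨hlow, hupp⟩ := sub_one_div_add_floor_add_one_div_mem_Icc (a := a) (by omega) hw.le
  rw [sum_filter_natCast_eq_neg_one_one_div ha, ← logDeriv_apply]
  set y : ℝ := ((a : ℝ) - 1) / a + ((⌊w⌋₊ + 1) / a : ℕ)
  calc _ = |1 / a * (logDeriv Real.Gamma y - Real.log (w / a))| := by
        rw [Real.log_div hw.ne' ha0.ne']
        ring_nf
    _ = 1 / a * |logDeriv Real.Gamma y - Real.log (w / a)| := by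
        rw [abs_mul, abs_of_pos (one_div_pos.2 ha0)]
    _ ≤ 1 / a * (w / a)⁻¹ := by
        gcongr
        exact Real.abs_logDeriv_Gamma_sub_log_le (by positivity) hlow hupp
    _ = 1 / w := by field_simp
    _ ≤ 1 * a / w := by rw [one_mul]; gcongr; exact_mod_cast ha.le
end

section
/- For every integer $a \ge 1$, $-\sum_{m \mid a} \frac{\mu(m)}{m} \log m = \frac{\phi(a)}{a} \sum_{p \mid a} \frac{\log p}{p-1}$, where the left sum is over the positive divisors $m$ of $a$ and the right sum over the primes $p$ dividing $a$. -/
/-!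
Only squarefree divisors contribute, so the sum runs over the sets `t` of prime factors of `a`,
the divisor `∏ t` carrying the weight `∏_{p ∈ t} (-1/p)` and the logarithm `∑_{p ∈ t} log p`.
Summing first over the prime `q` that supplies the logarithm gives
`-∑_q (log q / q) ∏_{p ≠ q} (1 - 1/p)`, and `(1/q) ∏_{p ≠ q} (1 - 1/p) = (∏_p (1 - 1/p)) / (q - 1)`
with `∏_p (1 - 1/p) = φ(a)/a`.
-/

open Finset ArithmeticFunction
open scoped ArithmeticFunction.Moebius

theorem Finset.sum_powerset_prod_mul_sum {ι R : Type*} [CommSemiring R] [DecidableEq ι]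
    (s : Finset ι) (f g : ι → R) :
    ∑ t ∈ s.powerset, (∏ i ∈ t, f i) * ∑ i ∈ t, g i
      = ∑ i ∈ s, f i * g i * ∏ j ∈ s.erase i, (1 + f j) := by
  induction s using Finset.induction_on with
  | empty => simp
  | @insert a s ha ih =>
    have hleft : ∀ t ∈ s.powerset, (∏ i ∈ insert a t, f i) * ∑ i ∈ insert a t, g i
        = f a * g a * ∏ i ∈ t, f i + f a * ((∏ i ∈ t, f i) * ∑ i ∈ t, g i) := by
      intro t ht
      have hat : a ∉ t := fun h => ha (mem_powerset.mp ht h)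
      rw [prod_insert hat, sum_insert hat]
      ring
    have hright : ∀ i ∈ s, f i * g i * ∏ j ∈ (insert a s).erase i, (1 + f j)
        = (1 + f a) * (f i * g i * ∏ j ∈ s.erase i, (1 + f j)) := by
      intro i hi
      rw [erase_insert_of_ne (ne_of_mem_of_not_mem hi ha).symm,
        prod_insert (fun h => ha (mem_of_mem_erase h))]
      ring
    rw [sum_powerset_insert ha, sum_congr rfl hleft, sum_insert ha, erase_insert ha,
      sum_congr rfl hright, sum_add_distrib, ← mul_sum, ← mul_sum, ← mul_sum, ← prod_one_add, ih]
    ring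

theorem Nat.sum_divisors_moebius_mul {R : Type*} [CommRing R] {n : ℕ} (hn : n ≠ 0) (F : ℕ → R) :
    ∑ d ∈ n.divisors, (μ d : R) * F d
      = ∑ t ∈ n.primeFactors.powerset, (-1) ^ #t * F (∏ p ∈ t, p) := by
  rw [← sum_filter_of_ne (p := Squarefree) fun d _ hd => ?_,
    Nat.sum_divisors_filter_squarefree hn, Nat.factors_eq]
  · refine sum_congr (by simp) fun t ht => ?_
    rw [t.prod_val, Function.id_def,
      isMultiplicative_moebius.map_prod_of_subset_primeFactors n t (mem_powerset.mp ht),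
      prod_congr rfl fun p hp => moebius_apply_prime
        (Nat.prime_of_mem_primeFactors (mem_powerset.mp ht hp))]
    simp
  · by_contra hsq
    simp [moebius_eq_zero_of_not_squarefree hsq] at hd

theorem Nat.sum_divisors_moebius_div_mul_log {n : ℕ} (hn : n ≠ 0) :
    ∑ m ∈ n.divisors, (μ m : ℝ) / m * Real.log m
      = ∑ t ∈ n.primeFactors.powerset, (∏ p ∈ t, -(p : ℝ)⁻¹) * ∑ p ∈ t, Real.log p := by
  simp_rw [div_mul_eq_mul_div, mul_div_assoc]
  rw [Nat.sum_divisors_moebius_mul hn]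
  refine sum_congr rfl fun t ht => ?_
  have ht0 : ∀ p ∈ t, (p : ℝ) ≠ 0 := fun p hp =>
    Nat.cast_ne_zero.mpr (Nat.prime_of_mem_primeFactors (mem_powerset.mp ht hp)).ne_zero
  push_cast
  rw [Real.log_prod ht0, prod_neg, prod_inv_distrib]
  ring

theorem Nat.totient_div_self_eq_prod {K : Type*} [Field K] [CharZero K] {n : ℕ} (hn : n ≠ 0) :
    (n.totient : K) / n = ∏ p ∈ n.primeFactors, (1 - (p : K)⁻¹) := by
  have h := congrArg (Rat.cast : ℚ → K) (Nat.totient_eq_mul_prod_factors n)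
  push_cast at h
  rw [h, mul_div_cancel_left₀ _ (Nat.cast_ne_zero.mpr hn)]

theorem moebius_log_sum_eq (a : ℕ) (ha : 1 ≤ a) :
    -(∑ m ∈ a.divisors, (ArithmeticFunction.moebius m : ℝ) / m * Real.log m)
      = (a.totient : ℝ) / a * ∑ p ∈ a.primeFactors, Real.log p / ((p : ℝ) - 1) := by
  have ha0 : a ≠ 0 := Nat.one_le_iff_ne_zero.mp ha
  calc -(∑ m ∈ a.divisors, (μ m : ℝ) / m * Real.log m)
      = -∑ t ∈ a.primeFactors.powerset, (∏ p ∈ t, -(p : ℝ)⁻¹) * ∑ p ∈ t, Real.log p := by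
        rw [Nat.sum_divisors_moebius_div_mul_log ha0]
    _ = ∑ q ∈ a.primeFactors, (q : ℝ)⁻¹ * Real.log q
          * ∏ p ∈ a.primeFactors.erase q, (1 - (p : ℝ)⁻¹) := by
        simp [Finset.sum_powerset_prod_mul_sum, sub_eq_add_neg]
    _ = (a.totient : ℝ) / a * ∑ p ∈ a.primeFactors, Real.log p / ((p : ℝ) - 1) := by
        rw [Nat.totient_div_self_eq_prod ha0, mul_sum]
        refine sum_congr rfl fun q hq => ?_
        have hq1 : (1 : ℝ) < q := by exact_mod_cast (Nat.prime_of_mem_primeFactors hq).one_lt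
        rw [← mul_prod_erase _ _ hq]
        field_simp [sub_ne_zero.mpr hq1.ne']
end

section
/- There is an absolute constant $K$ such that for every integer $a \ge 1$ and every real $w \ge 1$, $\sum_{\substack{1 \le n \le w \\ \gcd(n,a) = 1}} \frac{1}{n} = \frac{\phi(a)}{a}\left(\log w + \sum_{p \mid a} \frac{\log p}{p-1} + \gamma\right) + E(a,w)$ with $|E(a,w)| \le K\, d(a)/w$, where the sum on the right runs over primes $p$ dividing $a$. -/
/-!
Möbius inversion over the divisors of `a` turns the coprime harmonic sum into
`∑_{d ∣ a} μ(d)/d · H(w/d)`, where `H(x) = ∑_{m ≤ x} 1/m = log x + γ + O(1/x)`.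
Each divisor contributes an error `|μ(d)/d| · O(d/w) = O(1/w)`. In the main term
`∑_{d ∣ a} μ(d)/d · (log w - log d + γ)` only squarefree `d`, i.e. subsets `t` of the prime
factors of `a`, survive, and expanding `∏_{p ∣ a} (1 - 1/p)` together with its logarithmic
derivative identifies it with `φ(a)/a · (log w + γ + ∑_{p ∣ a} log p/(p - 1))`.
-/

open Finset Real
open scoped ArithmeticFunction.Moebius

theorem Finset.sum_powerset_prod_mul_add_sum {ι K : Type*} [Field K] [DecidableEq ι]
    (s : Finset ι) (f g : ι → K) (c : K) (hf : ∀ i ∈ s, 1 + f i ≠ 0) :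
    ∑ t ∈ s.powerset, (∏ i ∈ t, f i) * (c + ∑ i ∈ t, g i)
      = (∏ i ∈ s, (1 + f i)) * (c + ∑ i ∈ s, f i * g i / (1 + f i)) := by
  induction s using Finset.induction_on generalizing c with
  | empty => simp
  | insert a s ha ih =>
    have hs : ∀ i ∈ s, 1 + f i ≠ 0 := fun i hi => hf i (mem_insert_of_mem hi)
    have hfa : 1 + f a ≠ 0 := hf a (mem_insert_self a s)
    have hins : ∀ t ∈ s.powerset, (∏ i ∈ insert a t, f i) * (c + ∑ i ∈ insert a t, g i)
        = f a * ((∏ i ∈ t, f i) * ((c + g a) + ∑ i ∈ t, g i)) := by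
      intro t ht
      have hat : a ∉ t := fun h => ha (mem_powerset.mp ht h)
      rw [prod_insert hat, sum_insert hat]
      ring
    rw [sum_powerset_insert ha, sum_congr rfl hins, ← mul_sum, ih c hs, ih (c + g a) hs,
      prod_insert ha, sum_insert ha]
    field_simp
    ring

namespace ArithmeticFunction

theorem sum_divisors_moebius {R : Type*} [Ring R] (n : ℕ) :
    ∑ d ∈ n.divisors, (μ d : R) = if n = 1 then 1 else 0 := by
  simpa only [coe_mul_zeta_apply, intCoe_apply, one_apply] using
    congrArg (· n) (coe_moebius_mul_coe_zeta (R := R))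

theorem sum_divisors_moebius_mul_eq_sum_powerset {R : Type*} [CommRing R]
    {n : ℕ} (hn : n ≠ 0) (g : ℕ → R) :
    ∑ d ∈ n.divisors, μ d * g d
      = ∑ t ∈ n.primeFactors.powerset, (-1) ^ #t * g (∏ p ∈ t, p) := by
  rw [← sum_filter_of_ne (p := Squarefree) fun d _ h => ?_, Nat.sum_divisors_filter_squarefree hn,
    Nat.factors_eq]
  · refine sum_congr rfl fun t ht => ?_
    have ht' := mem_powerset.mp ht
    rw [prod_val, Function.id_def,
      isMultiplicative_moebius.map_prod_of_subset_primeFactors n t ht',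
      prod_congr rfl fun p hp => moebius_apply_prime (Nat.prime_of_mem_primeFactors (ht' hp))]
    simp
  · exact moebius_ne_zero_iff_squarefree.mp fun h0 => h (by simp [h0])

end ArithmeticFunction

theorem sum_filter_gcd_eq_one_eq_sum_moebius {R : Type*} [CommRing R] {a : ℕ} (ha : a ≠ 0)
    (s : Finset ℕ) (f : ℕ → R) :
    ∑ n ∈ s with n.gcd a = 1, f n
      = ∑ d ∈ a.divisors, μ d * ∑ n ∈ s with d ∣ n, f n := by
  have hdiv : ∀ n, {d ∈ a.divisors | d ∣ n} = (n.gcd a).divisors := fun n => by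
    ext d
    simp [Nat.dvd_gcd_iff, Nat.gcd_ne_zero_right ha, ha, and_comm]
  simp_rw [mul_sum, sum_filter]
  rw [sum_comm]
  refine sum_congr rfl fun n _ => ?_
  rw [← sum_filter, hdiv, ← sum_mul, ArithmeticFunction.sum_divisors_moebius]
  split_ifs <;> simp

theorem sum_Icc_filter_dvd {M : Type*} [AddCommMonoid M] {d : ℕ} (hd : d ≠ 0) (N : ℕ)
    (f : ℕ → M) : ∑ n ∈ Icc 1 N with d ∣ n, f n = ∑ m ∈ Icc 1 (N / d), f (d * m) := by
  have hd' := Nat.pos_of_ne_zero hd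
  refine (sum_nbij' (d * ·) (· / d) (fun m hm => ?_) (fun n hn => ?_) (fun m _ => ?_)
    (fun n hn => ?_) (fun _ _ => rfl)).symm
  · rw [mem_Icc] at hm
    rw [mem_filter, mem_Icc, Nat.mul_comm, ← Nat.le_div_iff_mul_le hd']
    exact ⟨⟨Nat.mul_pos hm.1 hd', hm.2⟩, dvd_mul_left d m⟩
  · rw [mem_filter, mem_Icc] at hn
    rw [mem_Icc]
    exact ⟨Nat.div_pos (Nat.le_of_dvd hn.1.1 hn.2) hd', Nat.div_le_div_right hn.1.2⟩
  · exact Nat.mul_div_cancel_left m hd'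
  · exact Nat.mul_div_cancel' (mem_filter.mp hn).2

theorem log_add_one_sub_log_le {x : ℝ} (hx : 0 < x) : log (x + 1) - log x ≤ 1 / x := by
  rw [← log_div (by positivity) hx.ne']
  calc log ((x + 1) / x) ≤ (x + 1) / x - 1 := log_le_sub_one_of_pos (by positivity)
    _ = 1 / x := by field_simp; ring

theorem abs_sum_Icc_floor_one_div_sub_log_sub_eulerMascheroniConstant_le {x : ℝ} (hx : 0 < x) :
    |∑ m ∈ Icc 1 ⌊x⌋₊, (1 : ℝ) / m - log x - eulerMascheroniConstant| ≤ 2 / x := by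
  rcases Nat.eq_zero_or_pos ⌊x⌋₊ with h0 | hpos
  · have hγ := eulerMascheroniConstant_lt_two_thirds
    have hx1 : x < 1 := by simpa using h0
    have hlog : 0 < - log x := by linarith [log_neg hx hx1]
    have hlog' : - log x ≤ 1 / x - 1 := by
      simpa [log_inv] using log_le_sub_one_of_pos (inv_pos.mpr hx)
    have : 1 < 1 / x := by rw [lt_div_iff₀ hx]; linarith
    have : 2 / x = 2 * (1 / x) := by ring
    rw [h0, Icc_eq_empty (by norm_num), sum_empty, abs_le]
    constructor <;> linarith [one_half_lt_eulerMascheroniConstant]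
  · set n := ⌊x⌋₊
    have hn : (0 : ℝ) < n := by exact_mod_cast hpos
    have hharm : (harmonic n : ℝ) = ∑ m ∈ Icc 1 n, (1 : ℝ) / m := by
      simp [harmonic_eq_sum_Icc]
    have hlo : eulerMascheroniConstant < harmonic n - log n := by
      simpa [eulerMascheroniSeq', hpos.ne'] using eulerMascheroniConstant_lt_eulerMascheroniSeq' n
    have hhi : harmonic n - log (n + 1) < eulerMascheroniConstant := by
      simpa [eulerMascheroniSeq] using eulerMascheroniSeq_lt_eulerMascheroniConstant n
    have hlogx : log n ≤ log x := log_le_log hn (Nat.floor_le hx.le)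
    have hlogx' : log x ≤ log (n + 1) := log_le_log hx (Nat.lt_floor_add_one x).le
    have hstep := log_add_one_sub_log_le hn
    have hnx : 1 / (n : ℝ) ≤ 2 / x := by
      rw [div_le_div_iff₀ hn hx]
      linarith [Nat.lt_floor_add_one x, (by exact_mod_cast hpos : (1 : ℝ) ≤ n)]
    rw [← hharm, abs_le]
    constructor <;> linarith

theorem Nat.totient_div_self_eq_prod_s6 {a : ℕ} (ha : a ≠ 0) :
    (a.totient : ℝ) / a = ∏ p ∈ a.primeFactors, (1 - (p : ℝ)⁻¹) := by
  have h := congrArg (Rat.cast : ℚ → ℝ) (Nat.totient_eq_mul_prod_factors a)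
  push_cast at h
  rw [h, mul_div_cancel_left₀ _ (Nat.cast_ne_zero.mpr ha)]

theorem sum_divisors_moebius_div_mul_sub_log {a : ℕ} (ha : a ≠ 0) (c : ℝ) :
    ∑ d ∈ a.divisors, (μ d : ℝ) / d * (c - log d)
      = a.totient / a * (c + ∑ p ∈ a.primeFactors, log p / (p - 1)) := by
  have hp : ∀ p ∈ a.primeFactors, (1 : ℝ) < p := fun p hp =>
    by exact_mod_cast (Nat.prime_of_mem_primeFactors hp).one_lt
  calc ∑ d ∈ a.divisors, (μ d : ℝ) / d * (c - log d)
      = ∑ d ∈ a.divisors, (μ d : ℝ) * ((c - log d) / d) :=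
        sum_congr rfl fun d _ => by ring
    _ = ∑ t ∈ a.primeFactors.powerset,
          (-1) ^ #t * ((c - log ((∏ p ∈ t, p : ℕ) : ℝ)) / ((∏ p ∈ t, p : ℕ) : ℝ)) :=
        ArithmeticFunction.sum_divisors_moebius_mul_eq_sum_powerset ha _
    _ = ∑ t ∈ a.primeFactors.powerset,
          (∏ p ∈ t, -(p : ℝ)⁻¹) * (c + ∑ p ∈ t, -log p) := by
        refine sum_congr rfl fun t ht => ?_
        have ht' : ∀ p ∈ t, (p : ℝ) ≠ 0 := fun p h =>
          by linarith [hp p (mem_powerset.mp ht h)]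
        rw [Nat.cast_prod, log_prod ht', prod_neg, prod_inv_distrib, sum_neg_distrib]
        ring
    _ = (∏ p ∈ a.primeFactors, (1 + -(p : ℝ)⁻¹))
          * (c + ∑ p ∈ a.primeFactors, -(p : ℝ)⁻¹ * -log p / (1 + -(p : ℝ)⁻¹)) :=
        sum_powerset_prod_mul_add_sum _ _ _ _ fun p h =>
          by linarith [inv_lt_one_of_one_lt₀ (hp p h)]
    _ = a.totient / a * (c + ∑ p ∈ a.primeFactors, log p / (p - 1)) := by
        rw [Nat.totient_div_self_eq_prod_s6 ha]
        congr 2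
        refine sum_congr rfl fun p h => ?_
        have : (p : ℝ) - 1 ≠ 0 := by linarith [hp p h]
        have : (p : ℝ) ≠ 0 := by linarith [hp p h]
        rw [show (1 : ℝ) + -(p : ℝ)⁻¹ = (p - 1) / p by field_simp; ring]
        field_simp

theorem sum_Icc_floor_filter_coprime_one_div {a : ℕ} (ha : a ≠ 0) (w : ℝ) :
    ∑ n ∈ Icc 1 ⌊w⌋₊ with n.gcd a = 1, (1 : ℝ) / n
      = ∑ d ∈ a.divisors, (μ d : ℝ) / d * ∑ m ∈ Icc 1 ⌊w / d⌋₊, (1 : ℝ) / m := by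
  rw [sum_filter_gcd_eq_one_eq_sum_moebius ha]
  refine sum_congr rfl fun d hd => ?_
  rw [sum_Icc_filter_dvd (Nat.pos_of_mem_divisors hd).ne', Nat.floor_div_natCast, mul_sum,
    mul_sum]
  refine sum_congr rfl fun m _ => ?_
  push_cast
  ring

theorem abs_moebius_div_mul_sum_Icc_floor_one_div_sub_log_le {d : ℕ} (hd : d ≠ 0) {w : ℝ}
    (hw : 0 < w) :
    |(μ d : ℝ) / d
        * (∑ m ∈ Icc 1 ⌊w / d⌋₊, (1 : ℝ) / m - log (w / d) - eulerMascheroniConstant)|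
      ≤ 2 / w := by
  have hd : (0 : ℝ) < d := by exact_mod_cast Nat.pos_of_ne_zero hd
  have hμ : |(μ d : ℝ)| ≤ 1 := by exact_mod_cast ArithmeticFunction.abs_moebius_le_one
  rw [abs_mul, abs_div, Nat.abs_cast]
  calc _ ≤ 1 / d * (2 / (w / d)) := by
        gcongr
        exact abs_sum_Icc_floor_one_div_sub_log_sub_eulerMascheroniConstant_le (by positivity)
    _ = 2 / w := by field_simp

theorem sum_reciprocal_coprime :
    ∃ K : ℝ, ∀ (a : ℕ) (w : ℝ), 1 ≤ a → 1 ≤ w →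
      |(∑ n ∈ (Finset.Icc 1 ⌊w⌋₊).filter (fun n : ℕ => Nat.gcd n a = 1), (1 : ℝ) / n)
          - (a.totient : ℝ) / a *
              (Real.log w + ∑ p ∈ a.primeFactors, Real.log p / ((p : ℝ) - 1)
                + Real.eulerMascheroniConstant)|
        ≤ K * (a.divisors.card : ℝ) / w := by
  refine ⟨2, fun a w ha hw => ?_⟩
  have ha0 : a ≠ 0 := by omega
  have hw0 : 0 < w := by linarith
  have hmain : (a.totient : ℝ) / a * (log w + ∑ p ∈ a.primeFactors, log p / ((p : ℝ) - 1)
      + eulerMascheroniConstant)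
      = ∑ d ∈ a.divisors, (μ d : ℝ) / d * (log (w / d) + eulerMascheroniConstant) := by
    rw [add_right_comm, ← sum_divisors_moebius_div_mul_sub_log ha0]
    refine sum_congr rfl fun d hd => ?_
    rw [log_div hw0.ne' (Nat.cast_ne_zero.mpr (Nat.pos_of_mem_divisors hd).ne')]
    ring
  rw [sum_Icc_floor_filter_coprime_one_div ha0, hmain, ← sum_sub_distrib]
  calc _ ≤ ∑ d ∈ a.divisors, 2 / w := by
        refine (abs_sum_le_sum_abs _ _).trans (sum_le_sum fun d hd => ?_)
        rw [← mul_sub, ← sub_sub]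
        exact abs_moebius_div_mul_sum_Icc_floor_one_div_sub_log_le
          (Nat.pos_of_mem_divisors hd).ne' hw0
    _ = 2 * #a.divisors / w := by rw [sum_const, nsmul_eq_mul]; ring
end
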